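/- Let G=(V,E) be a finite simple graph and f:V→ℝ injective. Then the Euler characteristic satisfies the symmetric Poincaré-Hopf formula χ(G) = Σ_{v∈V} (i_f(v)+i_{−f}(v))/2, and in particular χ(G) = Σ_{v∈V} i_f(v). -/

import Mathlib

open scoped Classical

/-- A finite simple graph: a finite vertex set together with a symmetric, irreflexive
adjacency relation supported on the vertex set. -/
structure FGraph (V : Type) where
  verts : Finset V
  Adj : V → V → Prop
  symm : ∀ {a b}, Adj a b → Adj b a
  loopless : ∀ a, ¬ Adj a a
  mem_of_adj : ∀ {a b}, Adj a b → a ∈ verts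

namespace FGraph

variable {V W : Type}

/-- The subgraph induced on the vertices satisfying `P`. -/
noncomputable def induce (G : FGraph V) (P : V → Prop) : FGraph V where
  verts := G.verts.filter P
  Adj a b := G.Adj a b ∧ P a ∧ P b
  symm h := ⟨G.symm h.1, h.2.2, h.2.1⟩
  loopless a h := G.loopless a h.1
  mem_of_adj h := Finset.mem_filter.mpr ⟨G.mem_of_adj h.1, h.2.1⟩

/-- The unit sphere of a vertex: the subgraph induced on its neighbors. -/
noncomputable def unitSphere (G : FGraph V) (v : V) : FGraph V :=
  G.induce (fun w => G.Adj v w)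

/-- The graph with the vertex `v` (and its edges) removed. -/
noncomputable def erase (G : FGraph V) (v : V) : FGraph V :=
  G.induce (fun w => w ≠ v)

/-- Inductive definition of contractibility: the one-point graph is contractible, and a
graph is contractible if some vertex has a contractible unit sphere and contractible
complement. -/
inductive Contractible : FGraph V → Prop
  | single (G : FGraph V) (v : V) (h : G.verts = {v}) : Contractible G
  | step (G : FGraph V) (v : V) (hv : v ∈ G.verts)
      (h1 : Contractible (G.unitSphere v)) (h2 : Contractible (G.erase v)) :
      Contractible G

mutual
  /-- `G` is a `d`-sphere: the empty graph is the `(-1)`-sphere, and a `d`-manifold is a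
  `d`-sphere if removing some vertex renders it contractible. -/
  inductive IsSphere : ℤ → FGraph V → Prop
    | empty (G : FGraph V) (h : G.verts = ∅) : IsSphere (-1) G
    | punctured (d : ℤ) (G : FGraph V) (hm : IsManifold d G) (v : V) (hv : v ∈ G.verts)
        (hc : Contractible (G.erase v)) : IsSphere d G
  /-- For `d ≥ 0`, `G` is a `d`-manifold iff every unit sphere is a `(d-1)`-sphere. -/
  inductive IsManifold : ℤ → FGraph V → Prop
    | intro (d : ℤ) (hd : 0 ≤ d) (G : FGraph V)
        (h : ∀ v ∈ G.verts, IsSphere (d - 1) (G.unitSphere v)) : IsManifold d G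
end

/-- A simplex of `G`: the vertex set of a complete subgraph. -/
def IsSimplex (G : FGraph V) (x : Finset V) : Prop :=
  x.Nonempty ∧ ↑x ⊆ G.verts ∧ ∀ a ∈ x, ∀ b ∈ x, a ≠ b → G.Adj a b

/-- The Barycentric refinement: vertices are the simplices of `G`, two being adjacent iff
one is strictly contained in the other. -/
noncomputable def barycentric (G : FGraph V) : FGraph (Finset V) where
  verts := G.verts.powerset.filter (fun x => G.IsSimplex x)
  Adj x y := G.IsSimplex x ∧ G.IsSimplex y ∧ (x ⊂ y ∨ y ⊂ x)
  symm h := ⟨h.2.1, h.1, h.2.2.symm⟩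
  loopless x h := by rcases h.2.2 with h' | h' <;> exact (ssubset_irrefl x h')
  mem_of_adj h := Finset.mem_filter.mpr ⟨Finset.mem_powerset.mpr h.1.2.1, h.1⟩

/-- Number of simplices of `G` with exactly `j` vertices (so `numSimplices G (k+1)` is
the `f`-vector entry `f_k(G)`). -/
noncomputable def numSimplices (G : FGraph V) (j : ℕ) : ℕ :=
  (G.verts.powerset.filter (fun x => G.IsSimplex x ∧ x.card = j)).card

/-- Euler characteristic `χ(G) = Σ_{k ≥ 0} (-1)^k f_k(G)`, where `f_k` counts the
simplices with `k+1` vertices. -/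
noncomputable def euler (G : FGraph V) : ℤ :=
  ∑ k ∈ Finset.range G.verts.card, (-1 : ℤ) ^ k * G.numSimplices (k + 1)

/-- The level set `{f = c}`: the subgraph of the Barycentric refinement induced by the
simplices on which `f - c` changes sign. -/
noncomputable def levelSet (G : FGraph V) (f : V → ℝ) (c : ℝ) : FGraph (Finset V) :=
  G.barycentric.induce (fun x => (∃ a ∈ x, f a - c < 0) ∧ (∃ b ∈ x, 0 < f b - c))

/-- Graph isomorphism. -/
def Iso (G : FGraph V) (H : FGraph W) : Prop :=
  ∃ φ : V → W, Set.BijOn φ ↑G.verts ↑H.verts ∧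
    ∀ a ∈ G.verts, ∀ b ∈ G.verts, (G.Adj a b ↔ H.Adj (φ a) (φ b))

/-- Zykov join of two graphs: disjoint union plus all edges between the two parts. -/
noncomputable def join (G : FGraph V) (H : FGraph W) : FGraph (V ⊕ W) where
  verts := G.verts.disjSum H.verts
  Adj a b :=
    match a, b with
    | .inl a, .inl b => G.Adj a b
    | .inr a, .inr b => H.Adj a b
    | .inl a, .inr b => a ∈ G.verts ∧ b ∈ H.verts
    | .inr a, .inl b => b ∈ G.verts ∧ a ∈ H.verts
  symm {a b} h := by
    cases a <;> cases b <;> simp_all <;> first | exact G.symm h | exact H.symm h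
  loopless a h := by
    cases a <;> simp_all <;> first | exact G.loopless _ h | exact H.loopless _ h
  mem_of_adj {a b} h := by
    cases a <;> cases b <;> simp_all [Finset.mem_disjSum] <;>
      first | exact G.mem_of_adj h | exact H.mem_of_adj h

/-- Union of two graphs on the same vertex type. -/
noncomputable def union (G H : FGraph V) : FGraph V where
  verts := G.verts ∪ H.verts
  Adj a b := G.Adj a b ∨ H.Adj a b
  symm h := h.imp G.symm H.symm
  loopless a h := h.elim (G.loopless a) (H.loopless a)
  mem_of_adj h :=
    h.elim (fun h' => Finset.mem_union_left _ (G.mem_of_adj h'))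
      (fun h' => Finset.mem_union_right _ (H.mem_of_adj h'))

/-- A `d`-ball: a graph of the form `S - v` for a `d`-sphere `S` and a vertex `v` of `S`
(up to graph isomorphism). -/
def IsBall (d : ℤ) (H : FGraph W) : Prop :=
  ∃ (S : FGraph ℕ) (v : ℕ), IsSphere d S ∧ v ∈ S.verts ∧ Iso H (S.erase v)

/-- A `d`-manifold with boundary: every unit sphere is a `(d-1)`-sphere or a `(d-1)`-ball. -/
def IsManifoldWithBoundary (d : ℤ) (G : FGraph V) : Prop :=
  ∀ v ∈ G.verts, IsSphere (d - 1) (G.unitSphere v) ∨ IsBall (d - 1) (G.unitSphere v)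

/-- The cyclic graph `C_n` on the vertex set `Fin n`. -/
def cycleGraph (n : ℕ) : FGraph (Fin n) where
  verts := Finset.univ
  Adj a b := a ≠ b ∧ ((a.val + 1) % n = b.val ∨ (b.val + 1) % n = a.val)
  symm h := ⟨h.1.symm, h.2.symm⟩
  loopless a h := h.1 rfl
  mem_of_adj _ := Finset.mem_univ _

/-- `G` is a disjoint union of cyclic graphs `C_n` with `n ≥ 4`: the vertex set splits
into pairwise disjoint pieces, edges never cross between pieces, and each piece induces
a graph isomorphic to a `C_n` with `n ≥ 4`. -/
def IsDisjointUnionOfCycles (G : FGraph V) : Prop :=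
  ∃ P : Finset (Finset V),
    (∀ S ∈ P, ↑S ⊆ G.verts) ∧
    (∀ S ∈ P, ∀ T ∈ P, S ≠ T → Disjoint S T) ∧
    (∀ v ∈ G.verts, ∃ S ∈ P, v ∈ S) ∧
    (∀ a b, G.Adj a b → ∀ S ∈ P, a ∈ S → b ∈ S) ∧
    (∀ S ∈ P, ∃ n, 4 ≤ n ∧ Iso (G.induce (· ∈ S)) (cycleGraph n))

/-- Poincaré–Hopf index `i_f(v) = 1 - χ(S^-_f(v))`. -/
noncomputable def pindex (G : FGraph V) (f : V → ℝ) (v : V) : ℤ :=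
  1 - ((G.unitSphere v).induce (fun w => f w < f v)).euler

/-- Curvature `K(v) = Σ_{k ≥ 0} (-1)^k f_{k-1}(S(v))/(k+1)` with `f_{-1} = 1`. -/
noncomputable def curvature (G : FGraph V) (v : V) : ℝ :=
  ∑ k ∈ Finset.range (G.verts.card + 1),
    (-1 : ℝ) ^ k * (if k = 0 then 1 else ((G.unitSphere v).numSimplices k : ℝ)) / (k + 1)

end FGraph

/-- `sign(a + i b) = sign(a) + i sign(b)`. -/
noncomputable def csgn (z : ℂ) : ℂ :=
  ⟨Real.sign z.re, Real.sign z.im⟩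

/-- The set `U = {1+i, 1-i, -1+i, -1-i}` of possible values of `csgn`. -/
noncomputable def signU : Finset ℂ :=
  {1 + Complex.I, 1 - Complex.I, -1 + Complex.I, -1 - Complex.I}

namespace FGraph

variable {V : Type}

/-- The set of values of `sign(ψ - c)` attained on the finite vertex set `x`. -/
noncomputable def signValues (ψ : V → ℂ) (c : ℂ) (x : Finset V) : Finset ℂ :=
  x.image (fun v => csgn (ψ v - c))

/-- The level set `{ψ = c}` of a complex-valued function: the subgraph of the Barycentric
refinement induced by the simplices on which `sign(ψ - c)` takes at least three distinct
values, including `-1+i` and `1-i`. -/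
noncomputable def complexLevelSet (G : FGraph V) (ψ : V → ℂ) (c : ℂ) : FGraph (Finset V) :=
  G.barycentric.induce (fun x =>
    3 ≤ (signValues ψ c x).card ∧
    (-1 + Complex.I) ∈ signValues ψ c x ∧ (1 - Complex.I) ∈ signValues ψ c x)

/-- The level set `{ψ = 0}_e` for a two-element subset `e ⊆ U`: the subgraph of the
Barycentric refinement induced by the simplices on which `sign(ψ)` attains both values
of `e` and at least three distinct values in total. -/
noncomputable def complexLevelSetE (G : FGraph V) (ψ : V → ℂ) (e : Finset ℂ) :
    FGraph (Finset V) :=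
  G.barycentric.induce (fun x =>
    (∀ u ∈ e, u ∈ signValues ψ 0 x) ∧ 3 ≤ (signValues ψ 0 x).card)

/-- `Ψ^{-1}(t)`: the subgraph of the Barycentric refinement induced by the simplices on
which `sign(ψ)` attains all values of `t`. -/
noncomputable def signPreimage (G : FGraph V) (ψ : V → ℂ) (t : Finset ℂ) :
    FGraph (Finset V) :=
  G.barycentric.induce (fun x => ∀ u ∈ t, u ∈ signValues ψ 0 x)

/-- The sign vectors of `F - c` attained on the finite vertex set `x`. -/
noncomputable def vecSignValues {k : ℕ} (F : V → Fin k → ℝ) (c : Fin k → ℝ)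
    (x : Finset V) : Finset (Fin k → ℝ) :=
  x.image (fun v j => Real.sign (F v j - c j))

/-- The level set `{F = c}` of an `ℝ^k`-valued function: the subgraph of the Barycentric
refinement induced by the simplices on which the sign vector of `F - c` takes at least
`k+1` distinct values, including the `k` vectors `(1,…,1,-1,1,…,1)`. -/
noncomputable def vecLevelSet (G : FGraph V) {k : ℕ} (F : V → Fin k → ℝ) (c : Fin k → ℝ) :
    FGraph (Finset V) :=
  G.barycentric.induce (fun x =>
    k + 1 ≤ (vecSignValues F c x).card ∧
    ∀ j : Fin k, (fun i => if i = j then (-1 : ℝ) else 1) ∈ vecSignValues F c x)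

end FGraph

/-- The complete graph on `Fin n`. -/
def completeFGraph (n : ℕ) : FGraph (Fin n) where
  verts := Finset.univ
  Adj a b := a ≠ b
  symm h := h.symm
  loopless a h := h rfl
  mem_of_adj _ := Finset.mem_univ _

/-- Stirling numbers of the second kind. -/
def stirling2 : ℕ → ℕ → ℕ
  | 0, 0 => 1
  | 0, _ + 1 => 0
  | _ + 1, 0 => 0
  | n + 1, m + 1 => (m + 1) * stirling2 n (m + 1) + stirling2 n m

/-!
Both sides are signed counts of simplices, each simplex `x` weighted by `(-1)^(|x|+1)`:
`χ(G)` counts all of them, and `i_f(v)` counts those whose `f`-maximum is `v`, because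
`y ↦ y ∪ {v}` matches the simplices of `S^-_f(v)` with the simplices `x ∋ v`, `x ≠ {v}`,
having their maximum at `v`, and raises the dimension by one. As `f` is injective on every
simplex, each simplex has exactly one maximum, so summing the indices over all vertices
counts every simplex once. Averaging the formulas for `f` and `-f` gives the symmetric one.
-/

namespace FGraph

variable {V : Type} {G : FGraph V}

noncomputable def simplices (G : FGraph V) : Finset (Finset V) :=
  G.verts.powerset.filter G.IsSimplex

lemma mem_simplices {x : Finset V} : x ∈ G.simplices ↔ G.IsSimplex x := by
  simp only [simplices, Finset.mem_filter, Finset.mem_powerset, and_iff_right_iff_imp]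
  exact fun hx => hx.2.1

lemma IsSimplex.one_le_card {x : Finset V} (hx : G.IsSimplex x) : 1 ≤ x.card :=
  Finset.card_pos.mpr hx.1

lemma IsSimplex.card_le {x : Finset V} (hx : G.IsSimplex x) : x.card ≤ G.verts.card :=
  Finset.card_le_card hx.2.1

lemma euler_eq_sum_simplices (G : FGraph V) :
    G.euler = ∑ x ∈ G.simplices, (-1 : ℤ) ^ (x.card + 1) := by
  have hmaps : ∀ x ∈ G.simplices, x.card - 1 ∈ Finset.range G.verts.card := fun x hx => by
    have := (mem_simplices.mp hx).one_le_card
    have := (mem_simplices.mp hx).card_le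
    rw [Finset.mem_range]
    omega
  rw [← Finset.sum_fiberwise_of_maps_to hmaps, euler]
  refine Finset.sum_congr rfl fun k _ => ?_
  have hfiber : G.simplices.filter (fun x => x.card - 1 = k)
      = G.verts.powerset.filter (fun x => G.IsSimplex x ∧ x.card = k + 1) := by
    ext x
    simp only [simplices, Finset.mem_filter, and_assoc]
    refine and_congr_right fun _ => and_congr_right fun hx => ?_
    have := hx.one_le_card
    omega
  rw [hfiber, Finset.sum_congr rfl fun x hx => by rw [(Finset.mem_filter.mp hx).2.2],
    Finset.sum_const, numSimplices, nsmul_eq_mul, mul_comm]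
  ring

lemma isSimplex_singleton {v : V} (hv : v ∈ G.verts) : G.IsSimplex {v} :=
  ⟨Finset.singleton_nonempty v, Finset.singleton_subset_iff.mpr hv,
    fun _ ha _ hb hab =>
      absurd ((Finset.mem_singleton.mp ha).trans (Finset.mem_singleton.mp hb).symm) hab⟩

lemma isSimplex_induce_iff {P : V → Prop} {x : Finset V} :
    (G.induce P).IsSimplex x ↔ G.IsSimplex x ∧ ∀ a ∈ x, P a := by
  simp only [IsSimplex, induce, Finset.subset_iff, Finset.mem_filter]
  constructor
  · rintro ⟨hne, hsub, hadj⟩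
    exact ⟨⟨hne, fun a ha => (hsub ha).1, fun a ha b hb hab => (hadj a ha b hb hab).1⟩,
      fun a ha => (hsub ha).2⟩
  · rintro ⟨⟨hne, hsub, hadj⟩, hP⟩
    exact ⟨hne, fun a ha => ⟨hsub ha, hP a ha⟩,
      fun a ha b hb hab => ⟨hadj a ha b hb hab, hP a ha, hP b hb⟩⟩

lemma isSimplex_insert_iff {v : V} {y : Finset V} (hvy : v ∉ y) (hy : y.Nonempty) :
    G.IsSimplex (insert v y) ↔ G.IsSimplex y ∧ ∀ a ∈ y, G.Adj v a := by
  simp only [IsSimplex, Finset.insert_subset_iff, Finset.forall_mem_insert,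
    Finset.insert_nonempty, true_and]
  constructor
  · rintro ⟨⟨-, hsub⟩, ⟨-, hvadj⟩, hadj⟩
    exact ⟨⟨hy, hsub, fun a ha b hb => (hadj a ha).2 b hb⟩,
      fun a ha => hvadj a ha (ne_of_mem_of_not_mem ha hvy).symm⟩
  · rintro ⟨⟨-, hsub, hadj⟩, hvadj⟩
    obtain ⟨a, ha⟩ := hy
    exact ⟨⟨G.mem_of_adj (hvadj a ha), hsub⟩, ⟨fun h => absurd rfl h, fun b hb _ => hvadj b hb⟩,
      fun b hb => ⟨fun _ => G.symm (hvadj b hb), hadj b hb⟩⟩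

/-- `S^-_f(v)`. -/
noncomputable def lowerUnitSphere (G : FGraph V) (f : V → ℝ) (v : V) : FGraph V :=
  (G.unitSphere v).induce (fun w => f w < f v)

lemma pindex_eq (G : FGraph V) (f : V → ℝ) (v : V) :
    G.pindex f v = 1 - (G.lowerUnitSphere f v).euler :=
  rfl

variable {f : V → ℝ}

noncomputable def simplicesWithTop (G : FGraph V) (f : V → ℝ) (v : V) : Finset (Finset V) :=
  G.simplices.filter (fun x => v ∈ x ∧ ∀ a ∈ x, f a ≤ f v)

lemma isSimplex_lowerUnitSphere_iff {v : V} {y : Finset V} (hvy : v ∉ y) (hy : y.Nonempty) :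
    (G.lowerUnitSphere f v).IsSimplex y ↔ G.IsSimplex (insert v y) ∧ ∀ a ∈ y, f a < f v := by
  rw [lowerUnitSphere, unitSphere, isSimplex_induce_iff, isSimplex_induce_iff,
    isSimplex_insert_iff hvy hy, and_assoc]

lemma notMem_of_isSimplex_lowerUnitSphere {v : V} {y : Finset V}
    (hy : (G.lowerUnitSphere f v).IsSimplex y) : v ∉ y := fun hv =>
  lt_irrefl _ ((isSimplex_induce_iff.mp hy).2 v hv)

lemma simplicesWithTop_eq (hf : ∀ ⦃a b⦄, G.Adj a b → f a ≠ f b) {v : V} (hv : v ∈ G.verts) :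
    G.simplicesWithTop f v
      = insert {v} ((G.lowerUnitSphere f v).simplices.image (insert v)) := by
  ext x
  simp only [simplicesWithTop, Finset.mem_filter, Finset.mem_insert, Finset.mem_image,
    mem_simplices]
  constructor
  · rintro ⟨hx, hvx, htop⟩
    rcases (x.erase v).eq_empty_or_nonempty with hy | hy
    · exact Or.inl (by rw [← Finset.insert_erase hvx, hy]; rfl)
    have hvy := Finset.notMem_erase v x
    rw [← Finset.insert_erase hvx] at hx
    refine Or.inr ⟨x.erase v, ?_, Finset.insert_erase hvx⟩
    refine (isSimplex_lowerUnitSphere_iff hvy hy).mpr ⟨hx, fun a ha => ?_⟩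
    have hadj := ((isSimplex_insert_iff hvy hy).mp hx).2 a ha
    exact (htop a (Finset.mem_of_mem_erase ha)).lt_of_ne (hf hadj).symm
  · rintro (rfl | ⟨y, hy, rfl⟩)
    · exact ⟨isSimplex_singleton hv, Finset.mem_singleton_self v,
        fun a ha => (congrArg f (Finset.mem_singleton.mp ha)).le⟩
    have hvy := notMem_of_isSimplex_lowerUnitSphere hy
    obtain ⟨hins, hlt⟩ := (isSimplex_lowerUnitSphere_iff hvy hy.1).mp hy
    exact ⟨hins, Finset.mem_insert_self v y,
      Finset.forall_mem_insert _ _ _ |>.mpr ⟨le_rfl, fun a ha => (hlt a ha).le⟩⟩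

lemma pindex_eq_sum_simplicesWithTop (hf : ∀ ⦃a b⦄, G.Adj a b → f a ≠ f b) {v : V}
    (hv : v ∈ G.verts) :
    G.pindex f v = ∑ x ∈ G.simplicesWithTop f v, (-1 : ℤ) ^ (x.card + 1) := by
  have hnotMem : {v} ∉ (G.lowerUnitSphere f v).simplices.image (insert v) := by
    simp only [Finset.mem_image, mem_simplices, not_exists, not_and]
    intro y hy hyv
    obtain ⟨a, ha⟩ := hy.1
    have hav : a = v := Finset.mem_singleton.mp (hyv ▸ Finset.mem_insert_of_mem ha)
    exact notMem_of_isSimplex_lowerUnitSphere hy (hav ▸ ha)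
  have hinj : Set.InjOn (insert v) ((G.lowerUnitSphere f v).simplices : Set (Finset V)) :=
    fun y hy z hz hyz => by
      rw [← Finset.erase_insert (notMem_of_isSimplex_lowerUnitSphere (mem_simplices.mp hy)),
        hyz, Finset.erase_insert (notMem_of_isSimplex_lowerUnitSphere (mem_simplices.mp hz))]
  rw [simplicesWithTop_eq hf hv, Finset.sum_insert hnotMem, Finset.sum_image hinj, pindex_eq,
    euler_eq_sum_simplices, Finset.card_singleton]
  have hcone : ∀ y ∈ (G.lowerUnitSphere f v).simplices,
      (-1 : ℤ) ^ ((insert v y).card + 1) = -(-1) ^ (y.card + 1) := fun y hy => by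
    rw [Finset.card_insert_of_notMem (notMem_of_isSimplex_lowerUnitSphere (mem_simplices.mp hy)),
      pow_succ]
    ring
  rw [Finset.sum_congr rfl hcone, Finset.sum_neg_distrib]
  ring

lemma card_filter_isTop (hf : ∀ ⦃a b⦄, G.Adj a b → f a ≠ f b) {x : Finset V}
    (hx : G.IsSimplex x) : (G.verts.filter fun v => v ∈ x ∧ ∀ a ∈ x, f a ≤ f v).card = 1 := by
  obtain ⟨v, hvx, htop⟩ := Finset.exists_max_image x f hx.1
  refine Finset.card_eq_one.mpr ⟨v, Finset.eq_singleton_iff_unique_mem.mpr ⟨?_, ?_⟩⟩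
  · exact Finset.mem_filter.mpr ⟨hx.2.1 hvx, hvx, htop⟩
  · rintro w hw
    obtain ⟨-, hwx, hwtop⟩ := Finset.mem_filter.mp hw
    by_contra hwv
    exact hf (hx.2.2 w hwx v hvx hwv) ((hwtop v hvx).antisymm (htop w hwx)).symm

theorem euler_eq_sum_pindex (hf : ∀ ⦃a b⦄, G.Adj a b → f a ≠ f b) :
    G.euler = ∑ v ∈ G.verts, G.pindex f v := by
  rw [Finset.sum_congr rfl fun v hv => pindex_eq_sum_simplicesWithTop hf hv, euler_eq_sum_simplices]
  rw [Finset.sum_comm' (t' := G.simplices)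
    (s' := fun x => G.verts.filter fun v => v ∈ x ∧ ∀ a ∈ x, f a ≤ f v)
    (fun v x => by simp only [simplicesWithTop, Finset.mem_filter]; tauto)]
  refine Finset.sum_congr rfl fun x hx => ?_
  rw [Finset.sum_const, card_filter_isTop hf (mem_simplices.mp hx), one_smul]

end FGraph

/-- Symmetric Poincaré–Hopf: for any finite simple graph `G` and injective
`f : V → ℝ`, `χ(G) = Σ_v (i_f(v) + i_{-f}(v))/2`, and in particular
`χ(G) = Σ_v i_f(v)`. -/
theorem poincare_hopf {V : Type} (G : FGraph V) (f : V → ℝ)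
    (hf : Set.InjOn f ↑G.verts) :
    (G.euler : ℝ) =
        ∑ v ∈ G.verts, ((G.pindex f v + G.pindex (fun w => -f w) v : ℤ) : ℝ) / 2 ∧
    G.euler = ∑ v ∈ G.verts, G.pindex f v := by
  have hadj : ∀ ⦃a b⦄, G.Adj a b → f a ≠ f b := fun a b hab hfab =>
    G.loopless a (hf (G.mem_of_adj hab) (G.mem_of_adj (G.symm hab)) hfab ▸ hab)
  have hneg : G.euler = ∑ v ∈ G.verts, G.pindex (fun w => -f w) v :=
    FGraph.euler_eq_sum_pindex fun a b hab => neg_injective.ne (hadj hab)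
  refine ⟨?_, FGraph.euler_eq_sum_pindex hadj⟩
  rw [← Finset.sum_div, ← Int.cast_sum, Finset.sum_add_distrib, ← FGraph.euler_eq_sum_pindex hadj,
    ← hneg]
  push_cast
  ring
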